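/- Let H be a real Hilbert space, K a convex set in a vector space, and E : K × H → ℝ such that for each fixed φ ∈ K, u ↦ E(φ, u) is concave and of the form E(φ,u) = c − ⟨A_φ u, u⟩ with A_φ bounded self-adjoint positive semidefinite. Consider the alternating iteration: φ^{n+1} ∈ argmin_{φ ∈ K} E(φ, u^n), and u^{n+1} = A_{φ^{n+1}} u^n / ‖A_{φ^{n+1}} u^n‖ (assuming the denominator is nonzero). Then E(φ^{n+1}, u^{n+1}) ≤ E(φ^n, u^n) for all n. -/

import Mathlib

/-!
For fixed `φ` the energy `u ↦ c - ⟪A_φ u, u⟫` is concave, so it lies below its linearization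
at `u`; on the unit ball that linearization is minimized at `A_φ u / ‖A_φ u‖`, where it is
already below the value at `u` by Cauchy–Schwarz. Hence the `u`-step does not increase the
energy, and the `φ`-step does not either, by minimality.
-/

open RealInnerProductSpace

section

variable {H : Type*} [NormedAddCommGroup H] [InnerProductSpace ℝ H]

lemma norm_inv_norm_smul_le_one (x : H) : ‖‖x‖⁻¹ • x‖ ≤ 1 := by
  rw [norm_smul, norm_inv, norm_norm]
  exact inv_mul_le_one_of_le₀ le_rfl (norm_nonneg x)

namespace ContinuousLinearMap.IsPositive

variable {T : H →L[ℝ] H}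

lemma linearization_le_inner_map_self (hT : T.IsPositive) (u v : H) :
    2 * ⟪T v, u⟫ - ⟪T v, v⟫ ≤ ⟪T u, u⟫ := by
  have hsymm : ⟪T u, v⟫ = ⟪T v, u⟫ := by
    rw [hT.inner_left_eq_inner_right, real_inner_comm]
  have hsq := hT.inner_nonneg_left (u - v)
  simp only [map_sub, inner_sub_left, inner_sub_right, hsymm] at hsq
  linarith

lemma inner_map_self_le_inner_map_normalized (hT : T.IsPositive) {v : H} (hv : ‖v‖ ≤ 1) :
    ⟪T v, v⟫ ≤ ⟪T (‖T v‖⁻¹ • T v), ‖T v‖⁻¹ • T v⟫ := by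
  have hcs : ⟪T v, v⟫ ≤ ‖T v‖ :=
    (real_inner_le_norm _ _).trans (mul_le_of_le_one_right (norm_nonneg _) hv)
  have hdir : ⟪T v, ‖T v‖⁻¹ • T v⟫ = ‖T v‖ := by
    rw [real_inner_smul_right, real_inner_self_eq_norm_sq]
    rcases eq_or_ne ‖T v‖ 0 with h | h
    · simp [h]
    · field_simp
  have := hT.linearization_le_inner_map_self (‖T v‖⁻¹ • T v) v
  linarith

end ContinuousLinearMap.IsPositive

end

theorem stmt17_general {H F : Type*} [NormedAddCommGroup H] [InnerProductSpace ℝ H]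
    [AddCommGroup F] [Module ℝ F]
    (K : Set F) (c : ℝ) (A : F → H →L[ℝ] H)
    (hsa : ∀ φ ∈ K, ∀ x y : H, ⟪A φ x, y⟫ = ⟪x, A φ y⟫)
    (hpsd : ∀ φ ∈ K, ∀ x : H, 0 ≤ ⟪A φ x, x⟫)
    (φ : ℕ → F) (u : ℕ → H) (hφK : ∀ n, φ n ∈ K) (hu0 : ‖u 0‖ = 1)
    (hmin : ∀ n, ∀ ψ ∈ K,
      c - ⟪A (φ (n + 1)) (u n), u n⟫ ≤ c - ⟪A ψ (u n), u n⟫)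
    (hrec : ∀ n, u (n + 1) = ‖A (φ (n + 1)) (u n)‖⁻¹ • A (φ (n + 1)) (u n)) :
    ∀ n, c - ⟪A (φ (n + 1)) (u (n + 1)), u (n + 1)⟫ ≤ c - ⟪A (φ n) (u n), u n⟫ := by
  have hnorm : ∀ n, ‖u n‖ ≤ 1
    | 0 => hu0.le
    | n + 1 => hrec n ▸ norm_inv_norm_smul_le_one _
  intro n
  have hpos : (A (φ (n + 1))).IsPositive :=
    (ContinuousLinearMap.isPositive_iff _).mpr
      ⟨hsa _ (hφK (n + 1)), hpsd _ (hφK (n + 1))⟩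
  have hstep_u := hpos.inner_map_self_le_inner_map_normalized (hnorm n)
  rw [← hrec n] at hstep_u
  linarith [hmin n (φ n) (hφK n)]

theorem stmt17 {H F : Type*} [NormedAddCommGroup H] [InnerProductSpace ℝ H]
    [AddCommGroup F] [Module ℝ F]
    (K : Set F) (hK : Convex ℝ K) (c : ℝ) (A : F → H →L[ℝ] H)
    (hsa : ∀ φ ∈ K, ∀ x y : H, ⟪A φ x, y⟫ = ⟪x, A φ y⟫)
    (hpsd : ∀ φ ∈ K, ∀ x : H, 0 ≤ ⟪A φ x, x⟫)
    (φ : ℕ → F) (u : ℕ → H) (hφK : ∀ n, φ n ∈ K) (hu0 : ‖u 0‖ = 1)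
    (hmin : ∀ n, ∀ ψ ∈ K,
      c - ⟪A (φ (n + 1)) (u n), u n⟫ ≤ c - ⟪A ψ (u n), u n⟫)
    (hnz : ∀ n, A (φ (n + 1)) (u n) ≠ 0)
    (hrec : ∀ n, u (n + 1) = ‖A (φ (n + 1)) (u n)‖⁻¹ • A (φ (n + 1)) (u n)) :
    ∀ n, c - ⟪A (φ (n + 1)) (u (n + 1)), u (n + 1)⟫ ≤ c - ⟪A (φ n) (u n), u n⟫ :=
  stmt17_general K c A hsa hpsd φ u hφK hu0 hmin hrec
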